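/- arXiv:1810.03313 — 7 statements merged into one kernel-verified Lean document; each statement's English description precedes it below -/
import Mathlib

section
/- Let d ≥ 1 be an integer and let γ, r, β > 0 and ν, σ ≥ 0 be real numbers with ν + σ < d < ν + σ + rγ. Then there exist δ₀ > 0 and C > 0 such that for every δ ∈ [0, δ₀), every Λ ≥ 0, every Ω > 0 and every p ∈ ℝ^d one has ∫_{ℝ^d} 1_{|k|>Λ} · |k|^{−ν} |p−k|^{−σ} / (|p−k|^γ + |k|^β + Ω)^r dk ≤ C · Ω^{−r + (d−ν−σ)/γ + δ_Λ} · Λ^{−β δ_Λ}, where δ_Λ := δ if Λ > 1 and δ_Λ := 0 if Λ ≤ 1 (so the factor Λ^{−βδ_Λ} equals 1 for Λ ≤ 1). -/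
/-!
Write `t = δ_Λ`. On `|k| > Λ` one has `Λ^{βt} (|p-k|^γ + Ω)^{r-t} ≤ (|p-k|^γ + |k|^β + Ω)^r`,
so it suffices to bound `∫ |k|^{-ν} |p-k|^{-σ} (|p-k|^γ + Ω)^{-s} dk` by `C Ω^{(d-ν-σ)/γ - s}`
uniformly in `p` and in `s = r - t ≥ r - δ₀`. Both factors are radially decreasing, so splitting
according to whether `|k| ≤ |p - k|` dominates this convolution by twice the integral of the
product at the same point. Rescaling `u = Ω^{1/γ} v` extracts the power of `Ω`, and what is left
is finite because `ν + σ < d < ν + σ + γ (r - δ₀)`.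
-/

open MeasureTheory Set Module
open scoped ENNReal

theorem rpow_mul_rpow_sub_le_add_rpow {A B c t r : ℝ} (hA : 0 < A) (hc : 0 ≤ c) (hcB : c ≤ B)
    (ht : 0 ≤ t) (htr : t ≤ r) : c ^ t * A ^ (r - t) ≤ (A + B) ^ r := by
  have hAB : A ≤ A + B := by linarith
  calc c ^ t * A ^ (r - t) ≤ (A + B) ^ t * (A + B) ^ (r - t) :=
        mul_le_mul (Real.rpow_le_rpow hc (by linarith) ht)
          (Real.rpow_le_rpow hA.le hAB (sub_nonneg.2 htr)) (by positivity)
          (Real.rpow_nonneg (hA.le.trans hAB) _)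
    _ = (A + B) ^ r := by rw [← Real.rpow_add (by linarith), add_sub_cancel]

theorem rpow_mul_indicator_kernel_le {Λ β t r ν σ γ Ω x y : ℝ} (hΛ : 0 ≤ Λ) (hβ : 0 ≤ β)
    (ht : 0 ≤ t) (htr : t ≤ r) (hΩ : 0 < Ω) (hx : 0 ≤ x) (hy : 0 ≤ y) :
    Λ ^ (β * t) * ((if Λ < x then (1 : ℝ) else 0) * x ^ (-ν) * y ^ (-σ) /
        (y ^ γ + x ^ β + Ω) ^ r)
      ≤ x ^ (-ν) * (y ^ (-σ) * (y ^ γ + Ω) ^ (-(r - t))) := by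
  split_ifs with hΛx
  · have hA : 0 < y ^ γ + Ω := add_pos_of_nonneg_of_pos (Real.rpow_nonneg hy γ) hΩ
    have hB : 0 ≤ x ^ β := Real.rpow_nonneg hx β
    have hpow := rpow_mul_rpow_sub_le_add_rpow hA (Real.rpow_nonneg hΛ β)
      (Real.rpow_le_rpow hΛ hΛx.le hβ) ht htr
    rw [← Real.rpow_mul hΛ] at hpow
    have hfrac : Λ ^ (β * t) / (y ^ γ + Ω + x ^ β) ^ r ≤ (y ^ γ + Ω) ^ (-(r - t)) := by
      rw [div_le_iff₀ (Real.rpow_pos_of_pos (by linarith) _), Real.rpow_neg hA.le, inv_mul_eq_div,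
        le_div_iff₀ (Real.rpow_pos_of_pos hA _)]
      exact hpow
    calc Λ ^ (β * t) * (1 * x ^ (-ν) * y ^ (-σ) / (y ^ γ + x ^ β + Ω) ^ r)
        = x ^ (-ν) * (y ^ (-σ) * (Λ ^ (β * t) / (y ^ γ + Ω + x ^ β) ^ r)) := by
          rw [add_right_comm]; ring
      _ ≤ x ^ (-ν) * (y ^ (-σ) * (y ^ γ + Ω) ^ (-(r - t))) := by
          have := Real.rpow_nonneg hx (-ν)
          have := Real.rpow_nonneg hy (-σ)
          gcongr
  · rw [zero_mul, zero_mul, zero_div, mul_zero]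
    exact mul_nonneg (Real.rpow_nonneg hx _)
      (mul_nonneg (Real.rpow_nonneg hy _) (Real.rpow_nonneg (by positivity) _))

section Convolution

variable {E : Type*} [NormedAddCommGroup E] [MeasurableSpace E] [BorelSpace E]
  (μ : Measure E) [μ.IsAddLeftInvariant] [μ.IsNegInvariant] [NullSingletonClass μ]

theorem mul_le_add_mul_of_antitoneOn {f g : ℝ → ℝ≥0∞} (hf : AntitoneOn f (Ioi 0))
    (hg : AntitoneOn g (Ioi 0)) {x y : ℝ} (hx : 0 < x) (hy : 0 < y) :
    f x * g y ≤ f x * g x + f y * g y := by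
  rcases le_total x y with hxy | hyx
  · exact le_add_right (by gcongr; exact hg hx hy hxy)
  · exact le_add_left (by gcongr; exact hf hy hx hyx)

theorem lintegral_comp_norm_mul_comp_norm_sub_le {f g : ℝ → ℝ≥0∞} (hf : AntitoneOn f (Ioi 0))
    (hg : AntitoneOn g (Ioi 0)) (hfm : Measurable f) (hgm : Measurable g) (p : E) :
    ∫⁻ k, f ‖k‖ * g ‖p - k‖ ∂μ ≤ 2 * ∫⁻ u, f ‖u‖ * g ‖u‖ ∂μ :=
  calc ∫⁻ k, f ‖k‖ * g ‖p - k‖ ∂μ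
      ≤ ∫⁻ k, f ‖k‖ * g ‖k‖ + f ‖p - k‖ * g ‖p - k‖ ∂μ := by
        refine lintegral_mono_ae ?_
        filter_upwards [μ.ae_ne 0, μ.ae_ne p] with k hk0 hkp
        exact mul_le_add_mul_of_antitoneOn hf hg (norm_pos_iff.2 hk0)
          (norm_pos_iff.2 (sub_ne_zero.2 hkp.symm))
    _ = 2 * ∫⁻ u, f ‖u‖ * g ‖u‖ ∂μ := by
        rw [lintegral_add_left (by fun_prop), lintegral_sub_left_eq_self (fun u => f ‖u‖ * g ‖u‖),
          two_mul]

end Convolution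

section HaarMeasure

variable {E : Type*} [NormedAddCommGroup E] [NormedSpace ℝ E] [FiniteDimensional ℝ E]
  [MeasurableSpace E] [BorelSpace E] (μ : Measure E) [μ.IsAddHaarMeasure]

theorem lintegral_eq_ofReal_pow_mul_lintegral_comp_smul {f : E → ℝ≥0∞} (hf : Measurable f)
    {R : ℝ} (hR : 0 < R) :
    ∫⁻ x, f x ∂μ = ENNReal.ofReal (R ^ finrank ℝ E) * ∫⁻ x, f (R • x) ∂μ := by
  rw [← lintegral_map hf (measurable_const_smul R), Measure.map_addHaar_smul μ hR.ne',
    lintegral_smul_measure, abs_of_nonneg (by positivity), smul_eq_mul, ← mul_assoc,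
    ← ENNReal.ofReal_mul (by positivity), mul_inv_cancel₀ (by positivity), ENNReal.ofReal_one,
    one_mul]

theorem lintegral_norm_kernel_eq_rpow_mul {ν σ γ s Ω : ℝ} (hγ : 0 < γ) (hΩ : 0 < Ω) :
    ∫⁻ u, ENNReal.ofReal (‖u‖ ^ (-ν)) * ENNReal.ofReal (‖u‖ ^ (-σ) * (‖u‖ ^ γ + Ω) ^ (-s)) ∂μ
      = ENNReal.ofReal (Ω ^ ((finrank ℝ E - ν - σ) / γ - s)) *
        ∫⁻ v, ENNReal.ofReal (‖v‖ ^ (-ν)) *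
          ENNReal.ofReal (‖v‖ ^ (-σ) * (‖v‖ ^ γ + 1) ^ (-s)) ∂μ := by
  set R := Ω ^ γ⁻¹
  have hR : 0 < R := by positivity
  have hRγ : R ^ γ = Ω := Real.rpow_inv_rpow hΩ.le hγ.ne'
  have hscale : ∀ v : E, ENNReal.ofReal (‖R • v‖ ^ (-ν)) *
      ENNReal.ofReal (‖R • v‖ ^ (-σ) * (‖R • v‖ ^ γ + Ω) ^ (-s))
      = ENNReal.ofReal (R ^ (-ν - σ) * Ω ^ (-s)) * (ENNReal.ofReal (‖v‖ ^ (-ν)) *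
        ENNReal.ofReal (‖v‖ ^ (-σ) * (‖v‖ ^ γ + 1) ^ (-s))) := by
    intro v
    have hv : ‖R • v‖ = R * ‖v‖ := by rw [norm_smul, Real.norm_of_nonneg hR.le]
    have hsum : ‖R • v‖ ^ γ + Ω = Ω * (‖v‖ ^ γ + 1) := by
      rw [hv, Real.mul_rpow hR.le (norm_nonneg v), hRγ]; ring
    rw [hsum, hv, Real.mul_rpow hR.le (norm_nonneg v), Real.mul_rpow hR.le (norm_nonneg v),
      Real.mul_rpow hΩ.le (by positivity), ← ENNReal.ofReal_mul (by positivity),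
      ← ENNReal.ofReal_mul (by positivity), ← ENNReal.ofReal_mul (by positivity),
      sub_eq_add_neg, Real.rpow_add hR]
    congr 1
    ring
  rw [lintegral_eq_ofReal_pow_mul_lintegral_comp_smul μ (by fun_prop) hR]
  simp_rw [hscale]
  rw [lintegral_const_mul' _ _ ENNReal.ofReal_ne_top, ← mul_assoc,
    ← ENNReal.ofReal_mul (by positivity)]
  congr 2
  rw [← Real.rpow_natCast, ← mul_assoc, ← Real.rpow_add hR, ← hRγ, ← Real.rpow_mul hR.le,
    ← Real.rpow_mul hR.le, ← Real.rpow_add hR]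
  congr 1
  field_simp
  ring

theorem integrable_norm_rpow_mul_rpow_add_one [Nontrivial E] {ν σ γ s : ℝ} (hs : 0 ≤ s)
    (h₁ : ν + σ < finrank ℝ E) (h₂ : finrank ℝ E < ν + σ + γ * s) :
    Integrable (fun v : E => ‖v‖ ^ (-ν) * (‖v‖ ^ (-σ) * (‖v‖ ^ γ + 1) ^ (-s))) μ := by
  set a : ℝ := finrank ℝ E - 1 - (ν + σ)
  have hradial : EqOn
      (fun y : ℝ => y ^ (finrank ℝ E - 1) • (y ^ (-ν) * (y ^ (-σ) * (y ^ γ + 1) ^ (-s))))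
      (fun y => y ^ a * (y ^ γ + 1) ^ (-s)) (Ioi 0) := by
    intro y (hy : 0 < y)
    simp only [smul_eq_mul, a]
    rw [← Real.rpow_natCast, Nat.cast_sub finrank_pos, Nat.cast_one,
      show (finrank ℝ E : ℝ) - 1 - (ν + σ) = finrank ℝ E - 1 + -ν + -σ by ring,
      Real.rpow_add hy, Real.rpow_add hy]
    ring
  have hmeas : ∀ S : Set ℝ, AEStronglyMeasurable (fun y : ℝ => y ^ a * (y ^ γ + 1) ^ (-s))
      (volume.restrict S) := fun S => by fun_prop
  have hnonneg : ∀ y : ℝ, 0 < y → 0 ≤ y ^ a * (y ^ γ + 1) ^ (-s) := fun y hy => by positivity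
  have hnear : IntegrableOn (fun y : ℝ => y ^ a * (y ^ γ + 1) ^ (-s)) (Ioc 0 1) := by
    have hdom : IntegrableOn (fun y : ℝ => y ^ a) (Ioc 0 1) := by
      rw [← intervalIntegrable_iff_integrableOn_Ioc_of_le zero_le_one]
      exact intervalIntegral.intervalIntegrable_rpow' (by simp only [a]; linarith)
    refine hdom.mono' (hmeas _) ((ae_restrict_iff' measurableSet_Ioc).2 (.of_forall ?_))
    intro y ⟨hy, _⟩
    rw [Real.norm_of_nonneg (hnonneg y hy)]
    refine mul_le_of_le_one_right (by positivity)
      (Real.rpow_le_one_of_one_le_of_nonpos ?_ (by linarith))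
    linarith [Real.rpow_nonneg hy.le γ]
  have hfar : IntegrableOn (fun y : ℝ => y ^ a * (y ^ γ + 1) ^ (-s)) (Ioi 1) := by
    have hdom : IntegrableOn (fun y : ℝ => y ^ (a - γ * s)) (Ioi 1) :=
      integrableOn_Ioi_rpow_of_lt (by simp only [a]; linarith) zero_lt_one
    refine hdom.mono' (hmeas _) ((ae_restrict_iff' measurableSet_Ioi).2 (.of_forall ?_))
    intro y (hy : 1 < y)
    have hy0 : 0 < y := one_pos.trans hy
    rw [Real.norm_of_nonneg (hnonneg y hy0), sub_eq_add_neg, Real.rpow_add hy0, ← neg_mul,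
      neg_mul_comm, Real.rpow_mul hy0.le]
    exact mul_le_mul_of_nonneg_left (Real.rpow_le_rpow_of_nonpos (by positivity) (by linarith)
      (by linarith)) (by positivity)
  rw [integrable_fun_norm_addHaar μ (f := fun y => y ^ (-ν) * (y ^ (-σ) * (y ^ γ + 1) ^ (-s))),
    integrableOn_congr_fun hradial measurableSet_Ioi, ← Ioc_union_Ioi_eq_Ioi zero_le_one]
  exact hnear.union hfar

theorem exists_lintegral_kernel_le [Nontrivial E] {ν σ γ s₀ : ℝ} (hγ : 0 < γ) (hν : 0 ≤ ν)
    (hσ : 0 ≤ σ) (hs₀ : 0 ≤ s₀) (h₁ : ν + σ < finrank ℝ E)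
    (h₂ : finrank ℝ E < ν + σ + γ * s₀) :
    ∃ C > (0 : ℝ), ∀ s, s₀ ≤ s → ∀ Ω, 0 < Ω → ∀ p : E,
      ∫⁻ k, ENNReal.ofReal (‖k‖ ^ (-ν)) *
          ENNReal.ofReal (‖p - k‖ ^ (-σ) * (‖p - k‖ ^ γ + Ω) ^ (-s)) ∂μ
        ≤ ENNReal.ofReal (C * Ω ^ ((finrank ℝ E - ν - σ) / γ - s)) := by
  set K := ∫⁻ v, ENNReal.ofReal (‖v‖ ^ (-ν)) *
    ENNReal.ofReal (‖v‖ ^ (-σ) * (‖v‖ ^ γ + 1) ^ (-s₀)) ∂μ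
  have hK : K ≠ ∞ := ne_of_lt <| lt_of_eq_of_lt
    (lintegral_congr fun v => (ENNReal.ofReal_mul (Real.rpow_nonneg (norm_nonneg v) _)).symm)
    (integrable_norm_rpow_mul_rpow_add_one μ hs₀ h₁ h₂).lintegral_lt_top
  refine ⟨2 * K.toReal + 1, by positivity, fun s hs Ω hΩ p => ?_⟩
  have hf : AntitoneOn (fun x : ℝ => ENNReal.ofReal (x ^ (-ν))) (Ioi 0) :=
    fun x (hx : 0 < x) _ _ hxy =>
      ENNReal.ofReal_le_ofReal (Real.rpow_le_rpow_of_nonpos hx hxy (neg_nonpos.2 hν))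
  have hg : AntitoneOn (fun x : ℝ => ENNReal.ofReal (x ^ (-σ) * (x ^ γ + Ω) ^ (-s))) (Ioi 0) :=
    fun x (hx : 0 < x) y (hy : 0 < y) hxy => ENNReal.ofReal_le_ofReal <|
      mul_le_mul (Real.rpow_le_rpow_of_nonpos hx hxy (neg_nonpos.2 hσ))
        (Real.rpow_le_rpow_of_nonpos (by positivity) (by gcongr) (by linarith))
        (by positivity) (by positivity)
  have hmono : ∫⁻ v, ENNReal.ofReal (‖v‖ ^ (-ν)) *
      ENNReal.ofReal (‖v‖ ^ (-σ) * (‖v‖ ^ γ + 1) ^ (-s)) ∂μ ≤ K := by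
    refine lintegral_mono fun v => ?_
    have hbase : 1 ≤ ‖v‖ ^ γ + 1 := by linarith [Real.rpow_nonneg (norm_nonneg v) γ]
    gcongr ENNReal.ofReal _ * ENNReal.ofReal (_ * ?_)
    exact Real.rpow_le_rpow_of_exponent_le hbase (by linarith)
  calc _ ≤ 2 * ∫⁻ u, ENNReal.ofReal (‖u‖ ^ (-ν)) *
          ENNReal.ofReal (‖u‖ ^ (-σ) * (‖u‖ ^ γ + Ω) ^ (-s)) ∂μ :=
        lintegral_comp_norm_mul_comp_norm_sub_le μ hf hg (by fun_prop) (by fun_prop) p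
    _ ≤ ENNReal.ofReal (2 * K.toReal) * ENNReal.ofReal (Ω ^ ((finrank ℝ E - ν - σ) / γ - s)) := by
        rw [lintegral_norm_kernel_eq_rpow_mul μ hγ hΩ, ENNReal.ofReal_mul zero_le_two,
          ENNReal.ofReal_toReal hK, ENNReal.ofReal_ofNat, mul_comm (ENNReal.ofReal _),
          ← mul_assoc]
        gcongr
    _ ≤ ENNReal.ofReal ((2 * K.toReal + 1) * Ω ^ ((finrank ℝ E - ν - σ) / γ - s)) := by
        rw [← ENNReal.ofReal_mul (by positivity)]
        gcongr
        linarith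

end HaarMeasure

theorem stmt_0_general
    (d : ℕ) (hd : 1 ≤ d) (γ r β ν σ : ℝ)
    (hγ : 0 < γ) (hβ : 0 < β) (hν : 0 ≤ ν) (hσ : 0 ≤ σ)
    (h₁ : ν + σ < d) (h₂ : (d : ℝ) < ν + σ + r * γ) :
    ∃ δ₀ > (0:ℝ), ∃ C > (0:ℝ), ∀ δ : ℝ, 0 ≤ δ → δ < δ₀ →
      ∀ Λ : ℝ, 0 ≤ Λ → ∀ Ω : ℝ, 0 < Ω → ∀ p : EuclideanSpace ℝ (Fin d),
        (∫⁻ k : EuclideanSpace ℝ (Fin d),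
            ENNReal.ofReal ((if Λ < ‖k‖ then (1:ℝ) else 0) * ‖k‖ ^ (-ν) * ‖p - k‖ ^ (-σ) /
              (‖p - k‖ ^ γ + ‖k‖ ^ β + Ω) ^ r))
          ≤ ENNReal.ofReal (C * Ω ^ (-r + ((d : ℝ) - ν - σ) / γ + (if 1 < Λ then δ else 0)) *
              Λ ^ (-(β * (if 1 < Λ then δ else 0)))) := by
  have : Nontrivial (EuclideanSpace ℝ (Fin d)) :=
    Module.nontrivial_of_finrank_pos (R := ℝ) (by rw [finrank_euclideanSpace_fin]; exact hd)
  set δ₀ := (ν + σ + r * γ - d) / (2 * γ)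
  have hγδ₀ : γ * δ₀ = (ν + σ + r * γ - d) / 2 := by simp only [δ₀]; field_simp
  have hδ₀r : δ₀ < r := lt_of_mul_lt_mul_left (by linarith) hγ.le
  obtain ⟨C, hC, hbound⟩ := exists_lintegral_kernel_le volume hγ hν hσ (s₀ := r - δ₀)
    (by linarith) (by rwa [finrank_euclideanSpace_fin])
    (by rw [finrank_euclideanSpace_fin]; linarith)
  refine ⟨δ₀, by positivity, C, hC, fun δ hδ hδδ₀ Λ hΛ Ω hΩ p => ?_⟩
  set t := if 1 < Λ then δ else 0
  have ht : 0 ≤ t ∧ t ≤ δ := by simp only [t]; split_ifs <;> constructor <;> linarith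
  have hΛt : 0 < Λ ^ (β * t) := by
    simp only [t]; split_ifs with h
    · exact Real.rpow_pos_of_pos (by linarith) _
    · simp
  have hweighted : (∫⁻ k : EuclideanSpace ℝ (Fin d),
        ENNReal.ofReal ((if Λ < ‖k‖ then (1:ℝ) else 0) * ‖k‖ ^ (-ν) * ‖p - k‖ ^ (-σ) /
          (‖p - k‖ ^ γ + ‖k‖ ^ β + Ω) ^ r)) * ENNReal.ofReal (Λ ^ (β * t))
      ≤ ENNReal.ofReal (C * Ω ^ (-r + ((d : ℝ) - ν - σ) / γ + t)) := by
    rw [← lintegral_mul_const' _ _ ENNReal.ofReal_ne_top]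
    calc _ ≤ ∫⁻ k : EuclideanSpace ℝ (Fin d), ENNReal.ofReal (‖k‖ ^ (-ν)) *
            ENNReal.ofReal (‖p - k‖ ^ (-σ) * (‖p - k‖ ^ γ + Ω) ^ (-(r - t))) := by
          refine lintegral_mono fun k => ?_
          rw [← ENNReal.ofReal_mul (by positivity), ← ENNReal.ofReal_mul (by positivity), mul_comm]
          exact ENNReal.ofReal_le_ofReal (rpow_mul_indicator_kernel_le hΛ hβ.le ht.1
            (by linarith) hΩ (norm_nonneg _) (norm_nonneg _))
      _ ≤ _ := hbound (r - t) (by linarith) Ω hΩ p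
      _ = _ := by rw [finrank_euclideanSpace_fin]; ring_nf
  rw [Real.rpow_neg hΛ, ← div_eq_mul_inv, ENNReal.ofReal_div_of_pos hΛt,
    ENNReal.le_div_iff_mul_le (Or.inl (by positivity)) (Or.inl ENNReal.ofReal_ne_top)]
  exact hweighted

theorem stmt_0
    (d : ℕ) (hd : 1 ≤ d) (γ r β ν σ : ℝ)
    (hγ : 0 < γ) (hr : 0 < r) (hβ : 0 < β) (hν : 0 ≤ ν) (hσ : 0 ≤ σ)
    (h₁ : ν + σ < d) (h₂ : (d : ℝ) < ν + σ + r * γ) :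
    ∃ δ₀ > (0:ℝ), ∃ C > (0:ℝ), ∀ δ : ℝ, 0 ≤ δ → δ < δ₀ →
      ∀ Λ : ℝ, 0 ≤ Λ → ∀ Ω : ℝ, 0 < Ω → ∀ p : EuclideanSpace ℝ (Fin d),
        (∫⁻ k : EuclideanSpace ℝ (Fin d),
            ENNReal.ofReal ((if Λ < ‖k‖ then (1:ℝ) else 0) * ‖k‖ ^ (-ν) * ‖p - k‖ ^ (-σ) /
              (‖p - k‖ ^ γ + ‖k‖ ^ β + Ω) ^ r))
          ≤ ENNReal.ofReal (C * Ω ^ (-r + ((d : ℝ) - ν - σ) / γ + (if 1 < Λ then δ else 0)) *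
              Λ ^ (-(β * (if 1 < Λ then δ else 0)))) :=
  stmt_0_general d hd γ r β ν σ hγ hβ hν hσ h₁ h₂
end

section
/- Let d ≥ 1 be an integer and α ∈ [0, d/2), γ > 0, 0 < β ≤ γ be such that 𝒟 := d − 2α − γ ∈ [0, γ). Let Θ, ω : ℝ^d → [0,∞) satisfy Θ(p) ≥ |p|^γ and ω(q) ≥ (1 + |q|²)^{β/2} for all p, q, and let v : ℝ^d × ℝ^d → ℂ, (p,q) ↦ v_p(q), satisfy |v_p(q)| ≤ c|q|^{−α} for a constant c > 0 and all p, q. Then for every sufficiently small ε > 0 there is a constant C > 0 such that for all Λ ≥ 0, all Ω ≥ 1 and all p ∈ ℝ^d: ∫_{ℝ^d} 1_{|q|>Λ} · |v_p(−q)|² · Ω / ((Θ(p−q) + ω(q) + Ω)(Θ(p−q) + ω(q))) dq ≤ C · Ω^{𝒟/γ + ε} · Λ^{−β ε_Λ/2}, where ε_Λ := ε if Λ > 1 and ε_Λ := 0 otherwise. -/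
/-!
Write `D = Θ(p - q) + ω(q) ≥ 1` and `t = 𝒟/γ + ε ∈ [0, 1]`. Interpolating between
`Ω/(D + Ω) ≤ 1` and `≤ Ω/D` gives `Ω/((D + Ω) D) ≤ Ω^t D^{-(1+t)}`, and the cutoff `|q| > Λ`
is paid for by `Λ^{βε/2} ≤ ω(q)^{ε/2} ≤ D^{ε/2}`. Since also `D ≥ |p - q|^γ`, the integrand is
at most a constant times `Ω^t Λ^{-βε/2} |q|^{-2α} (1 + |p - q|)^{-b}` with `b = γ(1 + t - ε/2)`,
where `2α < d < 2α + b`. Comparing `|q|` with `|p - q|` bounds this by `K(q) + K(p - q)` for the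
integrable kernel `K(x) = |x|^{-2α} (1 + |x|)^{-b}`, whence a bound uniform in `p`.
-/

open MeasureTheory Set Module Metric

lemma div_add_mul_le_rpow_mul_rpow_neg {D Ω t : ℝ} (hD : 0 < D) (hΩ : 0 < Ω) (ht0 : 0 ≤ t)
    (ht1 : t ≤ 1) : Ω / ((D + Ω) * D) ≤ Ω ^ t * D ^ (-(1 + t)) := by
  have hfrac : Ω / (D + Ω) ≤ (Ω / D) ^ t := by
    rcases le_total D Ω with h | h
    · calc Ω / (D + Ω) ≤ 1 := by rw [div_le_one (by linarith)]; linarith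
        _ ≤ (Ω / D) ^ t := Real.one_le_rpow (by rwa [le_div_iff₀ hD, one_mul]) ht0
    · calc Ω / (D + Ω) ≤ Ω / D := by gcongr; linarith
        _ = (Ω / D) ^ (1 : ℝ) := (Real.rpow_one _).symm
        _ ≤ (Ω / D) ^ t := Real.rpow_le_rpow_of_exponent_ge (by positivity)
            (by rwa [div_le_one hD]) ht1
  calc Ω / ((D + Ω) * D) = Ω / (D + Ω) / D := by rw [div_div]
    _ ≤ (Ω / D) ^ t / D := by gcongr
    _ = Ω ^ t * D ^ (-(1 + t)) := by
      rw [Real.div_rpow hΩ.le hD.le, neg_add, Real.rpow_add hD, Real.rpow_neg_one,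
        Real.rpow_neg hD.le]
      field_simp

lemma rpow_neg_le_two_rpow_mul_one_add_rpow_neg {y γ r D : ℝ} (hy : 0 ≤ y) (hγ : 0 ≤ γ)
    (hr : 0 ≤ r) (hD : 1 ≤ D) (hyD : y ^ γ ≤ D) :
    D ^ (-r) ≤ 2 ^ (γ * r) * (1 + y) ^ (-(γ * r)) := by
  have hbase : (1 + y) ^ γ ≤ 2 ^ γ * D := by
    rcases le_total y 1 with h | h
    · calc (1 + y) ^ γ ≤ 2 ^ γ := by gcongr; linarith
        _ ≤ 2 ^ γ * D := le_mul_of_one_le_right (by positivity) hD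
    · calc (1 + y) ^ γ ≤ (2 * y) ^ γ := by gcongr; linarith
        _ = 2 ^ γ * y ^ γ := Real.mul_rpow zero_le_two hy
        _ ≤ 2 ^ γ * D := by gcongr
  have hpow : (1 + y) ^ (γ * r) ≤ 2 ^ (γ * r) * D ^ r := by
    rw [Real.rpow_mul (by linarith), Real.rpow_mul zero_le_two, ← Real.mul_rpow (by positivity)
      (by linarith)]
    gcongr
  rw [Real.rpow_neg (by linarith), Real.rpow_neg (by linarith), ← div_eq_mul_inv,
    inv_le_comm₀ (by positivity) (by positivity), inv_div, div_le_iff₀ (by positivity)]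
  linarith [mul_comm (2 ^ (γ * r)) (D ^ r)]

lemma rpow_neg_mul_one_add_rpow_neg_le_add {a b x y : ℝ} (ha : 0 ≤ a) (hb : 0 ≤ b) (hx : 0 ≤ x)
    (hy : 0 < y) :
    x ^ (-a) * (1 + y) ^ (-b) ≤ x ^ (-a) * (1 + x) ^ (-b) + y ^ (-a) * (1 + y) ^ (-b) := by
  rcases le_total x y with h | h
  · have : (1 + y) ^ (-b) ≤ (1 + x) ^ (-b) :=
      Real.rpow_le_rpow_of_nonpos (by linarith) (by linarith) (by linarith)
    have : 0 ≤ y ^ (-a) * (1 + y) ^ (-b) := by positivity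
    nlinarith [Real.rpow_nonneg hx (-a)]
  · have : x ^ (-a) ≤ y ^ (-a) := Real.rpow_le_rpow_of_nonpos hy h (by linarith)
    have : 0 ≤ x ^ (-a) * (1 + x) ^ (-b) := by positivity
    nlinarith [Real.rpow_nonneg (by linarith : (0:ℝ) ≤ 1 + y) (-b)]

lemma rpow_le_one_add_sq_rpow_half {x β : ℝ} (hx : 0 ≤ x) (hβ : 0 ≤ β) :
    x ^ β ≤ (1 + x ^ 2) ^ (β / 2) := by
  calc x ^ β = (x ^ 2) ^ (β / 2) := by
        rw [← Real.rpow_natCast, ← Real.rpow_mul hx]; congr 1; push_cast; ring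
    _ ≤ (1 + x ^ 2) ^ (β / 2) := by gcongr; linarith

lemma ite_lt_le_rpow_mul_rpow {Λ x w β ε : ℝ} (hβ : 0 ≤ β) (hε : 0 ≤ ε) (hw : 1 ≤ w)
    (hxw : x ^ β ≤ w) :
    (if Λ < x then (1 : ℝ) else 0) ≤ Λ ^ (-(β * (if 1 < Λ then ε else 0) / 2)) * w ^ (ε / 2) := by
  split_ifs with hx hΛ hΛ
  · have hΛx : Λ ^ β ≤ w := le_trans (by gcongr) hxw
    calc (1 : ℝ) = Λ ^ (-(β * ε / 2)) * (Λ ^ β) ^ (ε / 2) := by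
          rw [← Real.rpow_mul (by linarith), ← Real.rpow_add (by linarith)]; ring_nf; simp
      _ ≤ Λ ^ (-(β * ε / 2)) * w ^ (ε / 2) := by gcongr
  · simpa using Real.one_le_rpow hw (by linarith)
  · positivity
  · simp only [mul_zero, zero_div, neg_zero, Real.rpow_zero, one_mul]; positivity

lemma integrand_le_kernel {E F : Type*} [NormedAddCommGroup E] [NormedAddCommGroup F]
    {α β γ c ε t Λ Ω : ℝ} {Θ ω : E → ℝ} {v : E → E → F} (hβ : 0 ≤ β) (hγ : 0 ≤ γ) (hε : 0 ≤ ε)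
    (ht0 : 0 ≤ t) (ht1 : t ≤ 1) (hεt : ε / 2 ≤ 1 + t) (hΛ : 0 ≤ Λ) (hΩ : 0 < Ω)
    (hΘ0 : ∀ p, 0 ≤ Θ p) (hΘ : ∀ p, ‖p‖ ^ γ ≤ Θ p) (hω : ∀ q, (1 + ‖q‖ ^ 2) ^ (β / 2) ≤ ω q)
    (hv : ∀ p q, ‖v p q‖ ≤ c * ‖q‖ ^ (-α)) (p q : E) :
    (if Λ < ‖q‖ then (1 : ℝ) else 0) * ‖v p (-q)‖ ^ 2 * Ω /
        ((Θ (p - q) + ω q + Ω) * (Θ (p - q) + ω q)) ≤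
      c ^ 2 * 2 ^ (γ * (1 + t - ε / 2)) * Ω ^ t * Λ ^ (-(β * (if 1 < Λ then ε else 0) / 2)) *
        (‖q‖ ^ (-(2 * α)) * (1 + ‖p - q‖) ^ (-(γ * (1 + t - ε / 2)))) := by
  set D := Θ (p - q) + ω q
  set L := Λ ^ (-(β * (if 1 < Λ then ε else 0) / 2))
  set r := 1 + t - ε / 2
  have hω1 : 1 ≤ ω q :=
    (Real.one_le_rpow (le_add_of_nonneg_right (sq_nonneg _)) (by positivity)).trans (hω q)
  have hD1 : 1 ≤ D := by linarith [hΘ0 (p - q)]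
  have hv2 : ‖v p (-q)‖ ^ 2 ≤ c ^ 2 * ‖q‖ ^ (-(2 * α)) := by
    have hvq := hv p (-q)
    rw [norm_neg] at hvq
    calc ‖v p (-q)‖ ^ 2 ≤ (c * ‖q‖ ^ (-α)) ^ 2 := pow_le_pow_left₀ (norm_nonneg _) hvq 2
      _ = c ^ 2 * ‖q‖ ^ (-(2 * α)) := by
        rw [mul_pow, ← Real.rpow_mul_natCast (norm_nonneg _)]; ring_nf
  have hind := ite_lt_le_rpow_mul_rpow (Λ := Λ) hβ hε hω1
    ((rpow_le_one_add_sq_rpow_half (norm_nonneg q) hβ).trans (hω q))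
  have hratio := div_add_mul_le_rpow_mul_rpow_neg (by linarith) hΩ ht0 ht1 (D := D)
  have hkernel := rpow_neg_le_two_rpow_mul_one_add_rpow_neg (norm_nonneg (p - q)) hγ
    (sub_nonneg.2 hεt) hD1 ((hΘ (p - q)).trans (by linarith [hω1]))
  calc (if Λ < ‖q‖ then (1 : ℝ) else 0) * ‖v p (-q)‖ ^ 2 * Ω / ((D + Ω) * D)
      = (if Λ < ‖q‖ then (1 : ℝ) else 0) * ‖v p (-q)‖ ^ 2 * (Ω / ((D + Ω) * D)) := by
        rw [mul_div_assoc]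
    _ ≤ (L * ω q ^ (ε / 2)) * (c ^ 2 * ‖q‖ ^ (-(2 * α))) * (Ω ^ t * D ^ (-(1 + t))) := by
        gcongr
    _ ≤ (L * D ^ (ε / 2)) * (c ^ 2 * ‖q‖ ^ (-(2 * α))) * (Ω ^ t * D ^ (-(1 + t))) := by
        gcongr
        linarith [hΘ0 (p - q)]
    _ = c ^ 2 * Ω ^ t * L * ‖q‖ ^ (-(2 * α)) * D ^ (-r) := by
        rw [show -r = ε / 2 + -(1 + t) by ring, Real.rpow_add (by linarith)]; ring
    _ ≤ c ^ 2 * Ω ^ t * L * ‖q‖ ^ (-(2 * α)) * (2 ^ (γ * r) * (1 + ‖p - q‖) ^ (-(γ * r))) := by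
        gcongr
    _ = _ := by ring

lemma lintegral_ofReal_le_of_le_const_mul {X : Type*} [MeasurableSpace X] {μ : Measure X}
    {f g : X → ℝ} {A M : ℝ} (hA : 0 ≤ A) (hfg : ∀ x, f x ≤ A * g x)
    (hg : ∫⁻ x, ENNReal.ofReal (g x) ∂μ ≤ ENNReal.ofReal M) :
    ∫⁻ x, ENNReal.ofReal (f x) ∂μ ≤ ENNReal.ofReal (A * M) :=
  calc ∫⁻ x, ENNReal.ofReal (f x) ∂μ ≤ ∫⁻ x, ENNReal.ofReal A * ENNReal.ofReal (g x) ∂μ :=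
        lintegral_mono fun x => by
          rw [← ENNReal.ofReal_mul hA]; exact ENNReal.ofReal_le_ofReal (hfg x)
    _ = ENNReal.ofReal A * ∫⁻ x, ENNReal.ofReal (g x) ∂μ :=
        lintegral_const_mul' _ _ ENNReal.ofReal_ne_top
    _ ≤ ENNReal.ofReal A * ENNReal.ofReal M := by gcongr
    _ = ENNReal.ofReal (A * M) := (ENNReal.ofReal_mul hA).symm

section Kernel

variable {E : Type*} [NormedAddCommGroup E] [NormedSpace ℝ E] [FiniteDimensional ℝ E]
  [MeasurableSpace E] [BorelSpace E] [Nontrivial E] (μ : Measure E) [μ.IsAddHaarMeasure]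

lemma integrableOn_ball_norm_rpow_neg {a : ℝ} (ha : a < finrank ℝ E) :
    IntegrableOn (fun x : E => ‖x‖ ^ (-a)) (ball 0 1) μ := by
  have hdim : ((finrank ℝ E - 1 : ℕ) : ℝ) = finrank ℝ E - 1 := by
    rw [Nat.cast_sub finrank_pos, Nat.cast_one]
  rw [integrableOn_fun_norm_addHaar μ (f := fun y : ℝ => y ^ (-a))]
  refine ((intervalIntegral.integrableOn_Ioo_rpow_iff (s := (finrank ℝ E - 1 : ℕ) + -a)
    zero_lt_one).2 (by rw [hdim]; linarith)).congr_fun (fun y hy => ?_) measurableSet_Ioo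
  simp only [smul_eq_mul]
  rw [Real.rpow_add hy.1, Real.rpow_natCast]

lemma integrable_norm_rpow_neg_mul_one_add_norm_rpow_neg {a b : ℝ} (ha : 0 ≤ a) (hb : 0 ≤ b)
    (had : a < finrank ℝ E) (hdab : finrank ℝ E < a + b) :
    Integrable (fun x : E => ‖x‖ ^ (-a) * (1 + ‖x‖) ^ (-b)) μ := by
  refine Integrable.mono' (((integrableOn_ball_norm_rpow_neg μ had).integrable_indicator
    measurableSet_ball).add ((integrable_one_add_norm hdab).const_mul (2 ^ a)))
    (by fun_prop) (Filter.Eventually.of_forall fun x => ?_)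
  rw [Real.norm_of_nonneg (by positivity), Pi.add_apply]
  by_cases hx : ‖x‖ < 1
  · rw [indicator_of_mem (mem_ball_zero_iff.2 hx)]
    have : (1 + ‖x‖) ^ (-b) ≤ 1 :=
      Real.rpow_le_one_of_one_le_of_nonpos (by linarith [norm_nonneg x]) (neg_nonpos.2 hb)
    have : (0 : ℝ) ≤ 2 ^ a * (1 + ‖x‖) ^ (-(a + b)) := by positivity
    nlinarith [Real.rpow_nonneg (norm_nonneg x) (-a)]
  · rw [indicator_of_notMem (by simpa using hx), zero_add, neg_add, Real.rpow_add (by positivity),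
      ← mul_assoc]
    gcongr
    calc ‖x‖ ^ (-a) ≤ ((1 + ‖x‖) / 2) ^ (-a) :=
          Real.rpow_le_rpow_of_nonpos (by positivity) (by linarith) (by linarith)
      _ = 2 ^ a * (1 + ‖x‖) ^ (-a) := by
          rw [Real.div_rpow (by positivity) zero_le_two, Real.rpow_neg zero_le_two]
          field_simp

lemma lintegral_norm_rpow_neg_mul_one_add_norm_sub_rpow_neg_le {a b : ℝ} (ha : 0 ≤ a) (hb : 0 ≤ b)
    (p : E) :
    ∫⁻ q, ENNReal.ofReal (‖q‖ ^ (-a) * (1 + ‖p - q‖) ^ (-b)) ∂μ ≤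
      2 * ∫⁻ x, ENNReal.ofReal (‖x‖ ^ (-a) * (1 + ‖x‖) ^ (-b)) ∂μ := by
  set K : E → ENNReal := fun x => ENNReal.ofReal (‖x‖ ^ (-a) * (1 + ‖x‖) ^ (-b))
  calc ∫⁻ q, ENNReal.ofReal (‖q‖ ^ (-a) * (1 + ‖p - q‖) ^ (-b)) ∂μ
      ≤ ∫⁻ q, K q + K (p - q) ∂μ := by
        refine lintegral_mono_ae ((μ.ae_ne p).mono fun q hq => ?_)
        rw [← ENNReal.ofReal_add (by positivity) (by positivity)]
        exact ENNReal.ofReal_le_ofReal (rpow_neg_mul_one_add_rpow_neg_le_add ha hb (norm_nonneg q)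
          (norm_pos_iff.2 (sub_ne_zero.2 hq.symm)))
    _ = 2 * ∫⁻ x, K x ∂μ := by
        rw [lintegral_add_left (by fun_prop), lintegral_sub_left_eq_self K p, two_mul]

lemma exists_forall_lintegral_norm_rpow_neg_mul_one_add_norm_sub_rpow_neg_le {a b : ℝ}
    (ha : 0 ≤ a) (hb : 0 ≤ b) (had : a < finrank ℝ E) (hdab : finrank ℝ E < a + b) :
    ∃ M, 0 ≤ M ∧ ∀ p : E,
      ∫⁻ q, ENNReal.ofReal (‖q‖ ^ (-a) * (1 + ‖p - q‖) ^ (-b)) ∂μ ≤ ENNReal.ofReal M := by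
  have hK := (integrable_norm_rpow_neg_mul_one_add_norm_rpow_neg μ ha hb had hdab).lintegral_lt_top
  refine ⟨(2 * ∫⁻ x, ENNReal.ofReal (‖x‖ ^ (-a) * (1 + ‖x‖) ^ (-b)) ∂μ).toReal,
    ENNReal.toReal_nonneg, fun p => ?_⟩
  rw [ENNReal.ofReal_toReal (ENNReal.mul_ne_top ENNReal.ofNat_ne_top hK.ne)]
  exact lintegral_norm_rpow_neg_mul_one_add_norm_sub_rpow_neg_le μ ha hb p

end Kernel

theorem stmt_5_general
    (d : ℕ) (hd : 1 ≤ d) (α γ β c : ℝ)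
    (hα0 : 0 ≤ α) (hα : α < (d : ℝ) / 2) (hγ : 0 < γ) (hβ0 : 0 < β)
    (h𝒟0 : 0 ≤ (d : ℝ) - 2 * α - γ) (h𝒟 : (d : ℝ) - 2 * α - γ < γ)
    (Θ ω : EuclideanSpace ℝ (Fin d) → ℝ)
    (hΘ0 : ∀ p, 0 ≤ Θ p)
    (hΘ : ∀ p, ‖p‖ ^ γ ≤ Θ p)
    (hω : ∀ q, (1 + ‖q‖ ^ 2) ^ (β / 2) ≤ ω q)
    (v : EuclideanSpace ℝ (Fin d) → EuclideanSpace ℝ (Fin d) → ℂ)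
    (hv : ∀ p q, ‖v p q‖ ≤ c * ‖q‖ ^ (-α)) :
    ∃ ε₀ > (0:ℝ), ∀ ε : ℝ, 0 < ε → ε < ε₀ → ∃ C > (0:ℝ),
      ∀ Λ : ℝ, 0 ≤ Λ → ∀ Ω : ℝ, 1 ≤ Ω → ∀ p : EuclideanSpace ℝ (Fin d),
        (∫⁻ q : EuclideanSpace ℝ (Fin d),
            ENNReal.ofReal ((if Λ < ‖q‖ then (1:ℝ) else 0) * ‖v p (-q)‖ ^ 2 * Ω /
              ((Θ (p - q) + ω q + Ω) * (Θ (p - q) + ω q))))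
          ≤ ENNReal.ofReal (C * Ω ^ (((d : ℝ) - 2 * α - γ) / γ + ε) *
              Λ ^ (-(β * (if 1 < Λ then ε else 0) / 2))) := by
  have h𝒟γ : ((d : ℝ) - 2 * α - γ) / γ < 1 := (div_lt_one hγ).2 h𝒟
  refine ⟨1 - ((d : ℝ) - 2 * α - γ) / γ, by linarith, fun ε hε hεε₀ => ?_⟩
  set t := ((d : ℝ) - 2 * α - γ) / γ + ε with ht
  set b := γ * (1 + t - ε / 2)
  have h𝒟γ0 : 0 ≤ ((d : ℝ) - 2 * α - γ) / γ := div_nonneg h𝒟0 hγ.le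
  have ht0 : 0 ≤ t := by linarith
  have hεt : ε / 2 ≤ 1 + t := by linarith
  have hb : 0 ≤ b := mul_nonneg hγ.le (sub_nonneg.2 hεt)
  have hab : 2 * α + b = d + γ * ε / 2 := by
    have hγt : γ * t = d - 2 * α - γ + γ * ε := by rw [ht]; field_simp
    simp only [b]; linear_combination hγt
  have : Nontrivial (EuclideanSpace ℝ (Fin d)) :=
    Module.nontrivial_of_finrank_pos (R := ℝ) (by rw [finrank_euclideanSpace_fin]; omega)
  obtain ⟨M, hM0, hM⟩ :=
    exists_forall_lintegral_norm_rpow_neg_mul_one_add_norm_sub_rpow_neg_le volume (a := 2 * α)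
      (by positivity) hb (by rw [finrank_euclideanSpace_fin]; linarith)
      (by rw [finrank_euclideanSpace_fin, hab]; nlinarith)
  refine ⟨c ^ 2 * 2 ^ b * M + 1, by positivity, fun Λ hΛ Ω hΩ p => ?_⟩
  set L := Λ ^ (-(β * (if 1 < Λ then ε else 0) / 2))
  have hΩtL : 0 ≤ Ω ^ t * L := by positivity
  calc _ ≤ ENNReal.ofReal (c ^ 2 * 2 ^ b * Ω ^ t * L * M) :=
        lintegral_ofReal_le_of_le_const_mul (by positivity)
          (fun q => integrand_le_kernel hβ0.le hγ.le hε.le ht0 (by linarith) hεt hΛ (by linarith)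
            hΘ0 hΘ hω hv p q) (hM p)
    _ ≤ ENNReal.ofReal ((c ^ 2 * 2 ^ b * M + 1) * Ω ^ t * L) :=
        ENNReal.ofReal_le_ofReal (by nlinarith)

theorem stmt_5
    (d : ℕ) (hd : 1 ≤ d) (α γ β c : ℝ)
    (hα0 : 0 ≤ α) (hα : α < (d : ℝ) / 2) (hγ : 0 < γ) (hβ0 : 0 < β) (hβγ : β ≤ γ)
    (h𝒟0 : 0 ≤ (d : ℝ) - 2 * α - γ) (h𝒟 : (d : ℝ) - 2 * α - γ < γ)
    (Θ ω : EuclideanSpace ℝ (Fin d) → ℝ)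
    (hΘ0 : ∀ p, 0 ≤ Θ p) (hω0 : ∀ q, 0 ≤ ω q)
    (hΘ : ∀ p, ‖p‖ ^ γ ≤ Θ p)
    (hω : ∀ q, (1 + ‖q‖ ^ 2) ^ (β / 2) ≤ ω q)
    (v : EuclideanSpace ℝ (Fin d) → EuclideanSpace ℝ (Fin d) → ℂ)
    (hc : 0 < c) (hv : ∀ p q, ‖v p q‖ ≤ c * ‖q‖ ^ (-α)) :
    ∃ ε₀ > (0:ℝ), ∀ ε : ℝ, 0 < ε → ε < ε₀ → ∃ C > (0:ℝ),
      ∀ Λ : ℝ, 0 ≤ Λ → ∀ Ω : ℝ, 1 ≤ Ω → ∀ p : EuclideanSpace ℝ (Fin d),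
        (∫⁻ q : EuclideanSpace ℝ (Fin d),
            ENNReal.ofReal ((if Λ < ‖q‖ then (1:ℝ) else 0) * ‖v p (-q)‖ ^ 2 * Ω /
              ((Θ (p - q) + ω q + Ω) * (Θ (p - q) + ω q))))
          ≤ ENNReal.ofReal (C * Ω ^ (((d : ℝ) - 2 * α - γ) / γ + ε) *
              Λ ^ (-(β * (if 1 < Λ then ε else 0) / 2))) :=
  stmt_5_general d hd α γ β c hα0 hα hγ hβ0 h𝒟0 h𝒟 Θ ω hΘ0 hΘ hω v hv
end

section
/- Let γ > 0, 0 < β ≤ γ and 0 ≤ 𝒟 < γβ²/(β² + 2γ²), and define u : ℝ → ℝ by u(x) := (βx − 𝒟)/γ. Then there exist real numbers s > 0 and σ ≥ 0 such that all of the following hold: u(s) < 1; u(u(s)) > 0; u(σ) < 1; s − u(s) + (σ − u(σ) − 1)/2 < 0; max(0, 1−s) + max(0, 1−σ)/2 < 1; and max(0, 1−s) + s − u(s) < 1. -/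
/-!
Write `u x = (β x - 𝒟) / γ`. With `σ = 0`, the six conditions on `s` reduce to four linear ones:
`1/2 < s`, `(β + γ) 𝒟 < β² s`, `β s < γ + 𝒟` and `2 (γ - β) s < γ - 3 𝒟`. The bound on `𝒟` is exactly
the statement that the lower bound `(β + γ) 𝒟 / β²` satisfies the last of them, and the remaining
lower bounds lie below the remaining upper bounds; so `s` slightly above `max (1/2) ((β + γ) 𝒟 / β²)`
does the job.
-/

open Filter Topology

lemma exists_gt_lt_and_mul_lt {L U a c : ℝ} (hLU : L < U) (hc : a * L < c) :
    ∃ s, L < s ∧ s < U ∧ a * s < c := by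
  have hnear : ∀ᶠ s in 𝓝 L, s < U ∧ a * s < c :=
    (eventually_lt_nhds hLU).and (((continuous_const_mul a).tendsto L).eventually (eventually_lt_nhds hc))
  obtain ⟨s, ⟨hsU, hs⟩, hLs⟩ :=
    ((hnear.filter_mono nhdsWithin_le_nhds).and (self_mem_nhdsWithin (s := Set.Ioi L))).exists
  exact ⟨s, hLs, hsU, hs⟩

section

variable {γ β 𝒟 : ℝ}

lemma three_mul_lt_of_lt_div (hβ0 : 0 < β) (hβγ : β ≤ γ)
    (h𝒟 : 𝒟 < γ * β ^ 2 / (β ^ 2 + 2 * γ ^ 2)) : 3 * 𝒟 < β := by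
  rw [lt_div_iff₀ (by positivity)] at h𝒟
  -- `3 γ β ≤ β² + 2 γ²` because `(γ - β) (2 γ - β) ≥ 0`
  nlinarith [mul_nonneg (sub_nonneg.2 hβγ) (by linarith : (0 : ℝ) ≤ 2 * γ - β)]

lemma gap_mul_lt_of_lt_div (hβ0 : 0 < β) (h𝒟 : 𝒟 < γ * β ^ 2 / (β ^ 2 + 2 * γ ^ 2)) :
    2 * (γ - β) * ((β + γ) * 𝒟 / β ^ 2) < γ - 3 * 𝒟 := by
  rw [lt_div_iff₀ (by positivity)] at h𝒟
  rw [mul_div_assoc', div_lt_iff₀ (by positivity)]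
  linarith

lemma exists_linear_conditions (hγ : 0 < γ) (hβ0 : 0 < β) (hβγ : β ≤ γ) (h𝒟0 : 0 ≤ 𝒟)
    (h𝒟 : 𝒟 < γ * β ^ 2 / (β ^ 2 + 2 * γ ^ 2)) :
    ∃ s, 1 / 2 < s ∧ (β + γ) * 𝒟 < β ^ 2 * s ∧ β * s < γ + 𝒟 ∧ 2 * (γ - β) * s < γ - 3 * 𝒟 := by
  have h3 := three_mul_lt_of_lt_div hβ0 hβγ h𝒟
  have hβ2 : 0 < β ^ 2 := by positivity
  have hLU : max (1 / 2) ((β + γ) * 𝒟 / β ^ 2) < (γ + 𝒟) / β := by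
    refine max_lt ((lt_div_iff₀ hβ0).2 (by linarith)) ?_
    rw [div_lt_div_iff₀ hβ2 hβ0]
    -- after cancelling `β` this is `γ 𝒟 < γ β`
    nlinarith [mul_pos (mul_pos hβ0 hγ) (by linarith : 0 < β - 𝒟)]
  have hgap : 2 * (γ - β) * max (1 / 2) ((β + γ) * 𝒟 / β ^ 2) < γ - 3 * 𝒟 := by
    rw [mul_max_of_nonneg _ _ (by linarith)]
    exact max_lt (by linarith) (gap_mul_lt_of_lt_div hβ0 h𝒟)
  obtain ⟨s, hLs, hsU, hs⟩ := exists_gt_lt_and_mul_lt hLU hgap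
  rw [lt_div_iff₀' hβ0] at hsU
  exact ⟨s, (le_max_left _ _).trans_lt hLs, (div_lt_iff₀' hβ2).1 ((le_max_right _ _).trans_lt hLs),
    hsU, hs⟩

end

theorem stmt_8
    (γ β 𝒟 : ℝ) (hγ : 0 < γ) (hβ0 : 0 < β) (hβγ : β ≤ γ)
    (h𝒟0 : 0 ≤ 𝒟) (h𝒟 : 𝒟 < γ * β ^ 2 / (β ^ 2 + 2 * γ ^ 2)) :
    ∃ s σ : ℝ, 0 < s ∧ 0 ≤ σ ∧
      (β * s - 𝒟) / γ < 1 ∧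
      0 < (β * ((β * s - 𝒟) / γ) - 𝒟) / γ ∧
      (β * σ - 𝒟) / γ < 1 ∧
      s - (β * s - 𝒟) / γ + (σ - (β * σ - 𝒟) / γ - 1) / 2 < 0 ∧
      max 0 (1 - s) + max 0 (1 - σ) / 2 < 1 ∧
      max 0 (1 - s) + s - (β * s - 𝒟) / γ < 1 := by
  obtain ⟨s, hs_half, hs_low, hs_up, hs_gap⟩ := exists_linear_conditions hγ hβ0 hβγ h𝒟0 h𝒟
  have hu0 : (β * 0 - 𝒟) / γ = -(𝒟 / γ) := by rw [mul_zero, zero_sub, neg_div]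
  have hgap : s - (β * s - 𝒟) / γ < (1 - 𝒟 / γ) / 2 := by
    rw [← sub_pos]
    have : (1 - 𝒟 / γ) / 2 - (s - (β * s - 𝒟) / γ) = (γ - 3 * 𝒟 - 2 * (γ - β) * s) / (2 * γ) := by
      field_simp
      ring
    rw [this]
    exact div_pos (by linarith) (by positivity)
  have h𝒟γ : 0 ≤ 𝒟 / γ := div_nonneg h𝒟0 hγ.le
  have hmax : max 0 (1 - s) < 1 / 2 := max_lt (by norm_num) (by linarith)
  refine ⟨s, 0, by linarith, le_rfl, (div_lt_one hγ).2 (by linarith), div_pos ?_ hγ, ?_, ?_, ?_, ?_⟩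
  · rw [mul_div_assoc', sub_pos, lt_div_iff₀ hγ]
    nlinarith
  · rw [hu0]
    linarith
  · rw [hu0]
    linarith
  · norm_num
    linarith
  · linarith
end

section
/- Let d ≥ 1 be an integer and μ > 0. Then for all p, k ∈ ℝ^d one has μ²(|k|² + 1) ≤ (1 + μ^{−2})(|p|² + μ²)(|k + p|² + μ²). -/
/-!
Write `a = ‖k‖`, `b = ‖p‖`, `c = ‖k + p‖` and `X = (b² + μ²)(c² + μ²)`. The identity
`X - μ²(b + c)² = (bc - μ²)²` together with `a ≤ b + c` gives `μ²a² ≤ X`, and trivially `μ⁴ ≤ X`.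
Hence `(1 + μ⁻²) X = X + μ⁻² X ≥ μ²a² + μ⁻²μ⁴ = μ²(a² + 1)`, where the last equality
also holds at `μ = 0` because `0⁻¹ = 0`.
-/

theorem sq_mul_add_sq_le_mul (μ b c : ℝ) :
    μ ^ 2 * (b + c) ^ 2 ≤ (b ^ 2 + μ ^ 2) * (c ^ 2 + μ ^ 2) := by
  nlinarith [sq_nonneg (b * c - μ ^ 2)]

theorem sq_mul_norm_sq_le {E : Type*} [SeminormedAddCommGroup E] (μ : ℝ) (p k : E) :
    μ ^ 2 * ‖k‖ ^ 2 ≤ (‖p‖ ^ 2 + μ ^ 2) * (‖k + p‖ ^ 2 + μ ^ 2) := by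
  have htri : ‖k‖ ≤ ‖p‖ + ‖k + p‖ := by
    simpa [add_comm] using norm_sub_le (k + p) p
  calc μ ^ 2 * ‖k‖ ^ 2 ≤ μ ^ 2 * (‖p‖ + ‖k + p‖) ^ 2 := by gcongr
    _ ≤ _ := sq_mul_add_sq_le_mul μ _ _

theorem stmt_12_general
    (d : ℕ) (μ : ℝ)
    (p k : EuclideanSpace ℝ (Fin d)) :
    μ ^ 2 * (‖k‖ ^ 2 + 1) ≤ (1 + (μ ^ 2)⁻¹) * (‖p‖ ^ 2 + μ ^ 2) * (‖k + p‖ ^ 2 + μ ^ 2) := by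
  set X := (‖p‖ ^ 2 + μ ^ 2) * (‖k + p‖ ^ 2 + μ ^ 2)
  have hkX : μ ^ 2 * ‖k‖ ^ 2 ≤ X := sq_mul_norm_sq_le μ p k
  have hμX : μ ^ 2 * μ ^ 2 ≤ X :=
    mul_le_mul (le_add_of_nonneg_left (by positivity)) (le_add_of_nonneg_left (by positivity))
      (by positivity) (by positivity)
  calc μ ^ 2 * (‖k‖ ^ 2 + 1) = μ ^ 2 * ‖k‖ ^ 2 + (μ ^ 2)⁻¹ * (μ ^ 2 * μ ^ 2) := by
        rw [← mul_assoc, inv_mul_mul_self]; ring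
    _ ≤ X + (μ ^ 2)⁻¹ * X := by gcongr
    _ = _ := by ring

theorem stmt_12
    (d : ℕ) (hd : 1 ≤ d) (μ : ℝ) (hμ : 0 < μ)
    (p k : EuclideanSpace ℝ (Fin d)) :
    μ ^ 2 * (‖k‖ ^ 2 + 1) ≤ (1 + (μ ^ 2)⁻¹) * (‖p‖ ^ 2 + μ ^ 2) * (‖k + p‖ ^ 2 + μ ^ 2) :=
  stmt_12_general d μ p k
end

section
/- Let d ≥ 1 be an integer and μ > 0. Then for all p, k ∈ ℝ^d one has (|p|² + μ²)^{−1/4} · (|p + k|² + μ²)^{−1/4} ≤ (μ^{−2} + μ^{−4})^{1/4} · (|k|² + 1)^{−1/4}. -/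
/-!
Write `P = (|p|² + μ²)(|p + k|² + μ²)`. Expanding, `P ≥ μ⁴`, and since `|k| ≤ |p| + |p + k|`,
AM-GM on `2μ²|p||p + k| ≤ |p|²|p + k|² + μ⁴` gives `P ≥ μ²|k|²`. Hence
`|k|² + 1 ≤ (μ⁻² + μ⁻⁴) P`, and raising this to the power `-1/4` is the claim.
-/

open Real

theorem pow_four_le_mul_sq_add_sq (a b μ : ℝ) : μ ^ 4 ≤ (a ^ 2 + μ ^ 2) * (b ^ 2 + μ ^ 2) := by
  nlinarith [sq_nonneg a, sq_nonneg b, sq_nonneg μ, mul_nonneg (sq_nonneg a) (sq_nonneg b)]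

theorem sq_mul_sq_le_mul_sq_add_sq {a b c : ℝ} (hc : 0 ≤ c) (habc : c ≤ a + b) (μ : ℝ) :
    μ ^ 2 * c ^ 2 ≤ (a ^ 2 + μ ^ 2) * (b ^ 2 + μ ^ 2) := by
  have hc2 : μ ^ 2 * c ^ 2 ≤ μ ^ 2 * (a + b) ^ 2 :=
    mul_le_mul_of_nonneg_left (pow_le_pow_left₀ hc habc 2) (sq_nonneg μ)
  have amgm : 2 * μ ^ 2 * (a * b) ≤ (a * b) ^ 2 + μ ^ 4 := by nlinarith [sq_nonneg (a * b - μ ^ 2)]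
  nlinarith

theorem sq_mul_sq_norm_le_mul_sq_norm_add_sq {E : Type*} [SeminormedAddCommGroup E] (p k : E)
    (μ : ℝ) : μ ^ 2 * ‖k‖ ^ 2 ≤ (‖p‖ ^ 2 + μ ^ 2) * (‖p + k‖ ^ 2 + μ ^ 2) := by
  refine sq_mul_sq_le_mul_sq_add_sq (norm_nonneg _) ?_ μ
  simpa [add_comm] using norm_sub_le (p + k) p

theorem sq_add_one_le_mul_of_le {μ c P : ℝ} (hμ : 0 < μ) (hc : μ ^ 2 * c ^ 2 ≤ P)
    (h1 : μ ^ 4 ≤ P) : c ^ 2 + 1 ≤ ((μ ^ 2)⁻¹ + (μ ^ 4)⁻¹) * P := by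
  have hc' : c ^ 2 ≤ (μ ^ 2)⁻¹ * P := by
    rw [le_inv_mul_iff₀ (by positivity)]; exact hc
  have h1' : 1 ≤ (μ ^ 4)⁻¹ * P := by
    rw [le_inv_mul_iff₀ (by positivity)]; simpa using h1
  linarith

theorem rpow_neg_mul_rpow_neg_le {x y C w r : ℝ} (hx : 0 ≤ x) (hy : 0 ≤ y) (hC : 0 < C)
    (hw : 0 < w) (hr : 0 ≤ r) (h : w ≤ C * (x * y)) :
    x ^ (-r) * y ^ (-r) ≤ C ^ r * w ^ (-r) := by
  have hwC : w / C ≤ x * y := by rwa [div_le_iff₀' hC]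
  calc x ^ (-r) * y ^ (-r) = (x * y) ^ (-r) := (mul_rpow hx hy).symm
    _ ≤ (w / C) ^ (-r) := rpow_le_rpow_of_nonpos (by positivity) hwC (by linarith)
    _ = C ^ r * w ^ (-r) := by
      rw [div_rpow hw.le hC.le, rpow_neg hC.le, div_eq_mul_inv, inv_inv, mul_comm]

theorem stmt_13_general
    (d : ℕ) (μ : ℝ) (hμ : 0 < μ)
    (p k : EuclideanSpace ℝ (Fin d)) :
    (‖p‖ ^ 2 + μ ^ 2) ^ (-(1 / 4 : ℝ)) * (‖p + k‖ ^ 2 + μ ^ 2) ^ (-(1 / 4 : ℝ)) ≤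
      ((μ ^ 2)⁻¹ + (μ ^ 4)⁻¹) ^ ((1 : ℝ) / 4) * (‖k‖ ^ 2 + 1) ^ (-(1 / 4 : ℝ)) :=
  rpow_neg_mul_rpow_neg_le (by positivity) (by positivity) (by positivity) (by positivity)
    (by norm_num) <|
    sq_add_one_le_mul_of_le hμ (sq_mul_sq_norm_le_mul_sq_norm_add_sq p k μ)
      (pow_four_le_mul_sq_add_sq _ _ μ)

theorem stmt_13
    (d : ℕ) (hd : 1 ≤ d) (μ : ℝ) (hμ : 0 < μ)
    (p k : EuclideanSpace ℝ (Fin d)) :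
    (‖p‖ ^ 2 + μ ^ 2) ^ (-(1 / 4 : ℝ)) * (‖p + k‖ ^ 2 + μ ^ 2) ^ (-(1 / 4 : ℝ)) ≤
      ((μ ^ 2)⁻¹ + (μ ^ 4)⁻¹) ^ ((1 : ℝ) / 4) * (‖k‖ ^ 2 + 1) ^ (-(1 / 4 : ℝ)) :=
  stmt_13_general d μ hμ p k
end

section
/- Let d ≥ 1 be an integer, μ > 0 and δ ∈ [0, 1). Then for all p ∈ ℝ^d and all k ∈ ℝ^d with k ≠ 0 one has (|p|² + μ²)^{−1/4} · (|p + k|² + μ²)^{−1/4} ≤ (μ^{−2} + μ^{−4})^{1/4} · |k|^{−(1−δ)/2}. -/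
/-!
Write `x = |p|`, `y = |p + k|` and `c = μ⁻² + μ⁻⁴`. Then `c (x² + μ²)(y² + μ²)` is at least `1`
(as `(x² + μ²)(y² + μ²) ≥ μ⁴`) and at least `(x + y)² ≥ |k|²` (by AM-GM, `2μ⁴xy ≤ μ⁶ + μ²x²y²`).
Since `0 < 2 - 2δ ≤ 2`, the power `|k|^(2 - 2δ)` lies below `max 1 |k|²`, so
`|k|^(2 - 2δ) ≤ c (x² + μ²)(y² + μ²)`; taking the `-1/4` power gives the claim.
-/

open Real

theorem Real.rpow_le_max_one_rpow {r s u : ℝ} (hr : 0 ≤ r) (hs : 0 ≤ s) (hsu : s ≤ u) :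
    r ^ s ≤ max 1 (r ^ u) := by
  rcases le_or_gt r 1 with h | h
  · exact le_max_of_le_left (rpow_le_one hr h hs)
  · exact le_max_of_le_right (rpow_le_rpow_of_exponent_le h.le hsu)

theorem one_le_mul_mul_sq_add_sq {μ : ℝ} (hμ : μ ≠ 0) (x y : ℝ) :
    1 ≤ ((μ ^ 2)⁻¹ + (μ ^ 4)⁻¹) * ((x ^ 2 + μ ^ 2) * (y ^ 2 + μ ^ 2)) := by
  have hμ4 : 0 < μ ^ 4 := by positivity
  rw [show (μ ^ 2)⁻¹ + (μ ^ 4)⁻¹ = (μ ^ 2 + 1) / μ ^ 4 by field_simp, div_mul_eq_mul_div,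
    le_div_iff₀ hμ4]
  nlinarith [sq_nonneg (x * y), sq_nonneg (μ * x), sq_nonneg (μ * y), sq_nonneg (μ ^ 2)]

theorem sq_add_le_mul_mul_sq_add_sq {μ : ℝ} (hμ : μ ≠ 0) (x y : ℝ) :
    (x + y) ^ 2 ≤ ((μ ^ 2)⁻¹ + (μ ^ 4)⁻¹) * ((x ^ 2 + μ ^ 2) * (y ^ 2 + μ ^ 2)) := by
  have hμ4 : 0 < μ ^ 4 := by positivity
  rw [show (μ ^ 2)⁻¹ + (μ ^ 4)⁻¹ = (μ ^ 2 + 1) / μ ^ 4 by field_simp, div_mul_eq_mul_div,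
    le_div_iff₀ hμ4]
  nlinarith [sq_nonneg (μ ^ 3 - μ * x * y), sq_nonneg (μ * x), sq_nonneg (μ * y),
    sq_nonneg (x * y), sq_nonneg (μ ^ 2)]

theorem Real.rpow_neg_quarter_mul_le {a b c r t : ℝ} (ha : 0 < a) (hb : 0 < b) (hc : 0 < c)
    (hr : 0 < r) (h : r ^ (4 * t) ≤ c * (a * b)) :
    a ^ (-(1 / 4 : ℝ)) * b ^ (-(1 / 4 : ℝ)) ≤ c ^ ((1 : ℝ) / 4) * r ^ (-t) := by
  have hrt : 0 < r ^ (4 * t) / c := by positivity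
  calc a ^ (-(1 / 4 : ℝ)) * b ^ (-(1 / 4 : ℝ))
      = (a * b) ^ (-(1 / 4 : ℝ)) := (mul_rpow ha.le hb.le).symm
    _ ≤ (r ^ (4 * t) / c) ^ (-(1 / 4 : ℝ)) :=
        rpow_le_rpow_of_nonpos hrt (by rwa [div_le_iff₀' hc]) (by norm_num)
    _ = c ^ ((1 : ℝ) / 4) * r ^ (-t) := by
        rw [div_rpow (by positivity) hc.le, ← rpow_mul hr.le, rpow_neg hc.le, div_inv_eq_mul,
          mul_comm]
        ring_nf

theorem stmt_14_general
    (d : ℕ) (μ δ : ℝ) (hμ : 0 < μ) (hδ0 : 0 ≤ δ) (hδ1 : δ < 1)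
    (p k : EuclideanSpace ℝ (Fin d)) (hk : k ≠ 0) :
    (‖p‖ ^ 2 + μ ^ 2) ^ (-(1 / 4 : ℝ)) * (‖p + k‖ ^ 2 + μ ^ 2) ^ (-(1 / 4 : ℝ)) ≤
      ((μ ^ 2)⁻¹ + (μ ^ 4)⁻¹) ^ ((1 : ℝ) / 4) * ‖k‖ ^ (-((1 - δ) / 2)) := by
  have hk_le : ‖k‖ ≤ ‖p‖ + ‖p + k‖ := by
    simpa [add_comm] using norm_sub_le (p + k) p
  have key : ‖k‖ ^ (4 * ((1 - δ) / 2)) ≤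
      ((μ ^ 2)⁻¹ + (μ ^ 4)⁻¹) * ((‖p‖ ^ 2 + μ ^ 2) * (‖p + k‖ ^ 2 + μ ^ 2)) := by
    calc ‖k‖ ^ (4 * ((1 - δ) / 2)) ≤ max 1 (‖k‖ ^ (2 : ℝ)) :=
          rpow_le_max_one_rpow (norm_nonneg k) (by linarith) (by linarith)
      _ ≤ max 1 ((‖p‖ + ‖p + k‖) ^ 2) := by
          rw [rpow_two]
          gcongr
      _ ≤ _ := max_le (one_le_mul_mul_sq_add_sq hμ.ne' _ _)
          (sq_add_le_mul_mul_sq_add_sq hμ.ne' _ _)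
  exact rpow_neg_quarter_mul_le (by positivity) (by positivity) (by positivity)
    (norm_pos_iff.mpr hk) key

theorem stmt_14
    (d : ℕ) (hd : 1 ≤ d) (μ δ : ℝ) (hμ : 0 < μ) (hδ0 : 0 ≤ δ) (hδ1 : δ < 1)
    (p k : EuclideanSpace ℝ (Fin d)) (hk : k ≠ 0) :
    (‖p‖ ^ 2 + μ ^ 2) ^ (-(1 / 4 : ℝ)) * (‖p + k‖ ^ 2 + μ ^ 2) ^ (-(1 / 4 : ℝ)) ≤
      ((μ ^ 2)⁻¹ + (μ ^ 4)⁻¹) ^ ((1 : ℝ) / 4) * ‖k‖ ^ (-((1 - δ) / 2)) :=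
  stmt_14_general d μ δ hμ hδ0 hδ1 p k hk
end

section
/- Let d ≥ 1 be an integer, μ ≥ 0 and α ≥ 0 with 0 ≤ d − 2α − 1 < 1; set 𝒟 := d − 2α − 1, Θ(p) := √(|p|² + μ²) and ω(q) := √(|q|² + 1). Then for every sufficiently small ε > 0 there exists a constant C > 0 such that for all Λ ≥ 0 and all p ∈ ℝ^d: ∫_{ℝ^d} 1_{|q|>Λ} · |q|^{−2α} · |Θ(q) − Θ(p−q)| / ((Θ(p−q) + ω(q))(Θ(q) + ω(q))) dq ≤ C · Λ^{−ε_Λ/2} · (|p|^{𝒟+ε} + 1), where ε_Λ := ε if Λ > 1 and ε_Λ := 0 otherwise. -/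
/-!
Since `r ↦ √(r² + μ²)` is 1-Lipschitz, `|Θ(q) − Θ(p − q)| ≤ |p|`, and the denominator is at least
`ω (|Θ(q) − Θ(p − q)| + ω)` with `ω = ω(q)`; as `x / (x + ω) ≤ min 1 (x / ω) ≤ (x / ω)^θ` for
`θ = 𝒟 + ε ∈ (0, 1]`, the quotient is at most `|p|^θ ω(q)^(-(1 + θ))`. The resulting majorant
`|q|^(-2α) ω(q)^(-(1 + θ))` is integrable by radial integration: `-2α > -d` at the origin and the
radial exponent `d - 1 - 2α - (1 + θ) = -1 - ε` at infinity. For `Λ > 1`, half of that spare `ε`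
pays for the factor `|q|^(-ε/2) ≤ Λ^(-ε/2)` on `|q| > Λ`.
-/

open MeasureTheory Set Module

theorem sqrt_sq_add_le_sqrt_sq_add_add_abs_sub {c : ℝ} (hc : 0 ≤ c) (a b : ℝ) :
    √(a ^ 2 + c) ≤ √(b ^ 2 + c) + |a - b| := by
  have hb : |b| ≤ √(b ^ 2 + c) := Real.abs_le_sqrt (by linarith)
  refine Real.sqrt_le_iff.2 ⟨by positivity, ?_⟩
  have hba : b * (a - b) ≤ |b| * |a - b| := by rw [← abs_mul]; exact le_abs_self _
  nlinarith [Real.sq_sqrt (show 0 ≤ b ^ 2 + c by positivity), sq_abs (a - b),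
    mul_le_mul_of_nonneg_right hb (abs_nonneg (a - b))]

theorem abs_sqrt_sq_add_sub_sqrt_sq_add_le {c : ℝ} (hc : 0 ≤ c) (a b : ℝ) :
    |√(a ^ 2 + c) - √(b ^ 2 + c)| ≤ |a - b| := by
  have h₁ := sqrt_sq_add_le_sqrt_sq_add_add_abs_sub hc a b
  have h₂ := sqrt_sq_add_le_sqrt_sq_add_add_abs_sub hc b a
  rw [abs_sub_comm b a] at h₂
  exact abs_sub_le_iff.2 ⟨by linarith, by linarith⟩

theorem div_add_le_div_rpow {x ω θ : ℝ} (hx : 0 ≤ x) (hω : 0 < ω) (hθ₀ : 0 ≤ θ) (hθ₁ : θ ≤ 1) :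
    x / (x + ω) ≤ (x / ω) ^ θ := by
  rcases le_total x ω with hxω | hωx
  · calc x / (x + ω) ≤ x / ω := div_le_div_of_nonneg_left hx hω (by linarith)
      _ = (x / ω) ^ (1 : ℝ) := (Real.rpow_one _).symm
      _ ≤ (x / ω) ^ θ := Real.rpow_le_rpow_of_exponent_ge' (by positivity)
          ((div_le_one hω).2 hxω) hθ₀ hθ₁
  · calc x / (x + ω) ≤ 1 := (div_le_one (by positivity)).2 (by linarith)
      _ ≤ (x / ω) ^ θ := Real.one_le_rpow ((one_le_div hω).2 hωx) hθ₀

theorem abs_sub_div_add_mul_add_le {a b ω P θ : ℝ} (ha : 0 ≤ a) (hb : 0 ≤ b) (hω : 0 < ω)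
    (hP : |a - b| ≤ P) (hθ₀ : 0 ≤ θ) (hθ₁ : θ ≤ 1) :
    |a - b| / ((b + ω) * (a + ω)) ≤ P ^ θ * ω ^ (-(1 + θ)) := by
  set x := |a - b|
  have hx : 0 ≤ x := abs_nonneg _
  have hxab : x ≤ a + b := by
    simpa [abs_of_nonneg ha, abs_of_nonneg hb] using abs_sub a b
  calc x / ((b + ω) * (a + ω)) ≤ x / (ω * (x + ω)) :=
        div_le_div_of_nonneg_left hx (by positivity) (by nlinarith [mul_nonneg ha hb])
    _ = x / (x + ω) / ω := by rw [div_div, mul_comm]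
    _ ≤ (x / ω) ^ θ / ω := by gcongr; exact div_add_le_div_rpow hx hω hθ₀ hθ₁
    _ ≤ (P / ω) ^ θ / ω := by gcongr
    _ = P ^ θ * ω ^ (-(1 + θ)) := by
        rw [Real.div_rpow (hx.trans hP) hω.le, Real.rpow_neg hω.le, Real.rpow_add hω,
          Real.rpow_one]
        field_simp

theorem abs_sqrt_sub_div_le_norm_rpow_mul {E : Type*} [SeminormedAddCommGroup E] (p q : E) (m : ℝ)
    {θ : ℝ} (hθ₀ : 0 ≤ θ) (hθ₁ : θ ≤ 1) :
    |√(‖q‖ ^ 2 + m ^ 2) - √(‖p - q‖ ^ 2 + m ^ 2)| /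
        ((√(‖p - q‖ ^ 2 + m ^ 2) + √(‖q‖ ^ 2 + 1)) * (√(‖q‖ ^ 2 + m ^ 2) + √(‖q‖ ^ 2 + 1))) ≤
      ‖p‖ ^ θ * (‖q‖ ^ 2 + 1) ^ (-((1 + θ) / 2)) := by
  have hP : |√(‖q‖ ^ 2 + m ^ 2) - √(‖p - q‖ ^ 2 + m ^ 2)| ≤ ‖p‖ :=
    (abs_sqrt_sq_add_sub_sqrt_sq_add_le (sq_nonneg m) _ _).trans <| by
      simpa [norm_sub_rev p q] using abs_norm_sub_norm_le q (q - p)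
  have hω : 0 < √(‖q‖ ^ 2 + 1) := Real.sqrt_pos.2 (by positivity)
  convert abs_sub_div_add_mul_add_le (Real.sqrt_nonneg _) (Real.sqrt_nonneg _) hω hP hθ₀ hθ₁
    using 2
  rw [Real.sqrt_eq_rpow, ← Real.rpow_mul (by positivity)]
  ring_nf

theorem ite_mul_rpow_le_rpow_mul_rpow {Λ r b δ : ℝ} (hΛ : 0 ≤ Λ) (hr : 0 ≤ r) (hδ : 0 ≤ δ)
    (hΛδ : 0 < Λ ∨ δ = 0) :
    (if Λ < r then (1 : ℝ) else 0) * r ^ b ≤ Λ ^ (-δ) * r ^ (b + δ) := by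
  split_ifs with hΛr
  · rw [one_mul]
    rcases hΛδ with hΛ₀ | rfl
    · have hr₀ : 0 < r := hΛ₀.trans hΛr
      calc r ^ b = r ^ (-δ) * r ^ (b + δ) := by rw [← Real.rpow_add hr₀]; ring_nf
        _ ≤ Λ ^ (-δ) * r ^ (b + δ) := mul_le_mul_of_nonneg_right
          (Real.rpow_le_rpow_of_nonpos hΛ₀ hΛr.le (neg_nonpos.2 hδ)) (Real.rpow_nonneg hr _)
    · simp
  · rw [zero_mul]
    exact mul_nonneg (Real.rpow_nonneg hΛ _) (Real.rpow_nonneg hr _)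

theorem ite_mul_rpow_mul_abs_sqrt_sub_div_le {E : Type*} [SeminormedAddCommGroup E] (p q : E)
    (m : ℝ) {Λ δ b θ : ℝ} (hΛ : 0 ≤ Λ) (hδ : 0 ≤ δ) (hΛδ : 0 < Λ ∨ δ = 0) (hθ₀ : 0 ≤ θ)
    (hθ₁ : θ ≤ 1) :
    (if Λ < ‖q‖ then (1 : ℝ) else 0) * ‖q‖ ^ b * |√(‖q‖ ^ 2 + m ^ 2) - √(‖p - q‖ ^ 2 + m ^ 2)| /
        ((√(‖p - q‖ ^ 2 + m ^ 2) + √(‖q‖ ^ 2 + 1)) * (√(‖q‖ ^ 2 + m ^ 2) + √(‖q‖ ^ 2 + 1))) ≤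
      Λ ^ (-δ) * ‖p‖ ^ θ * (‖q‖ ^ (b + δ) * (‖q‖ ^ 2 + 1) ^ (-((1 + θ) / 2))) := by
  rw [mul_div_assoc]
  calc _ ≤ Λ ^ (-δ) * ‖q‖ ^ (b + δ) * (‖p‖ ^ θ * (‖q‖ ^ 2 + 1) ^ (-((1 + θ) / 2))) :=
        mul_le_mul (ite_mul_rpow_le_rpow_mul_rpow hΛ (norm_nonneg q) hδ hΛδ)
          (abs_sqrt_sub_div_le_norm_rpow_mul p q m hθ₀ hθ₁) (by positivity)
          (mul_nonneg (Real.rpow_nonneg hΛ _) (by positivity))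
    _ = _ := by ring

theorem integrable_norm_rpow_mul_norm_sq_add_one_rpow {E : Type*} [NormedAddCommGroup E]
    [NormedSpace ℝ E] [MeasurableSpace E] [BorelSpace E] [FiniteDimensional ℝ E] [Nontrivial E]
    (μ : Measure E) [μ.IsAddHaarMeasure] {s t : ℝ} (hs : -(finrank ℝ E : ℝ) < s)
    (hst : (finrank ℝ E : ℝ) + s + 2 * t < 0) :
    Integrable (fun x : E ↦ ‖x‖ ^ s * (‖x‖ ^ 2 + 1) ^ t) μ := by
  set n := finrank ℝ E
  have hn : 1 ≤ n := finrank_pos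
  have ht : t ≤ 0 := by linarith
  have hradial : ∀ r : ℝ, 0 < r →
      ‖r ^ (n - 1) • (r ^ s * (r ^ 2 + 1) ^ t)‖ = r ^ ((n : ℝ) - 1 + s) * (r ^ 2 + 1) ^ t := by
    intro r hr
    rw [Real.norm_of_nonneg (by positivity), smul_eq_mul, ← mul_assoc, ← Real.rpow_natCast,
      Nat.cast_sub hn, Nat.cast_one, ← Real.rpow_add hr]
  have hmeas : AEStronglyMeasurable (fun r : ℝ ↦ r ^ (n - 1) • (r ^ s * (r ^ 2 + 1) ^ t)) :=
    (by fun_prop : Measurable _).aestronglyMeasurable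
  rw [integrable_fun_norm_addHaar μ (f := fun r ↦ r ^ s * (r ^ 2 + 1) ^ t),
    ← Ioc_union_Ioi_eq_Ioi zero_le_one]
  refine IntegrableOn.union ?_ ?_
  · have hint : IntegrableOn (fun r : ℝ ↦ r ^ ((n : ℝ) - 1 + s)) (Ioc 0 1) :=
      (intervalIntegrable_iff_integrableOn_Ioc_of_le zero_le_one).1
        (intervalIntegral.intervalIntegrable_rpow' (by linarith))
    refine hint.mono' hmeas.restrict (ae_restrict_of_forall_mem measurableSet_Ioc fun r hr ↦ ?_)
    rw [hradial r hr.1]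
    exact mul_le_of_le_one_right (Real.rpow_nonneg hr.1.le _)
      (Real.rpow_le_one_of_one_le_of_nonpos (by nlinarith) ht)
  · have hint : IntegrableOn (fun r : ℝ ↦ r ^ ((n : ℝ) - 1 + s + 2 * t)) (Ioi 1) :=
      integrableOn_Ioi_rpow_of_lt (by linarith) zero_lt_one
    refine hint.mono' hmeas.restrict
      (ae_restrict_of_forall_mem measurableSet_Ioi fun r (hr : 1 < r) ↦ ?_)
    have hr0 : 0 < r := zero_lt_one.trans hr
    rw [hradial r hr0, Real.rpow_add hr0 _ (2 * t), Real.rpow_mul hr0.le, Real.rpow_two]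
    exact mul_le_mul_of_nonneg_left
      (Real.rpow_le_rpow_of_nonpos (by positivity) (by linarith) ht) (Real.rpow_nonneg hr0.le _)

theorem stmt_15_general
    (d : ℕ) (hd : 1 ≤ d) (μ α : ℝ)
    (h𝒟0 : 0 ≤ (d : ℝ) - 2 * α - 1) (h𝒟1 : (d : ℝ) - 2 * α - 1 < 1) :
    ∃ ε₀ > (0:ℝ), ∀ ε : ℝ, 0 < ε → ε < ε₀ → ∃ C > (0:ℝ),
      ∀ Λ : ℝ, 0 ≤ Λ → ∀ p : EuclideanSpace ℝ (Fin d),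
        (∫⁻ q : EuclideanSpace ℝ (Fin d),
            ENNReal.ofReal ((if Λ < ‖q‖ then (1:ℝ) else 0) * ‖q‖ ^ (-(2 * α)) *
              |Real.sqrt (‖q‖ ^ 2 + μ ^ 2) - Real.sqrt (‖p - q‖ ^ 2 + μ ^ 2)| /
              ((Real.sqrt (‖p - q‖ ^ 2 + μ ^ 2) + Real.sqrt (‖q‖ ^ 2 + 1)) *
                (Real.sqrt (‖q‖ ^ 2 + μ ^ 2) + Real.sqrt (‖q‖ ^ 2 + 1)))))
          ≤ ENNReal.ofReal (C * Λ ^ (-((if 1 < Λ then ε else 0) / 2)) *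
              (‖p‖ ^ (((d : ℝ) - 2 * α - 1) + ε) + 1)) := by
  have : Nontrivial (EuclideanSpace ℝ (Fin d)) :=
    nontrivial_of_finrank_pos (R := ℝ) (by rwa [finrank_euclideanSpace_fin])
  refine ⟨1 - ((d : ℝ) - 2 * α - 1), by linarith, fun ε hε hε₀ ↦ ?_⟩
  set θ := (d : ℝ) - 2 * α - 1 + ε
  set J : ℝ → ENNReal := fun δ ↦ ∫⁻ q : EuclideanSpace ℝ (Fin d),
    ENNReal.ofReal (‖q‖ ^ (-(2 * α) + δ) * (‖q‖ ^ 2 + 1) ^ (-((1 + θ) / 2)))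
  have hJ : ∀ δ, 0 ≤ δ → δ < ε → J δ < ⊤ := fun δ hδ₀ hδε ↦
    (integrable_norm_rpow_mul_norm_sq_add_one_rpow volume
      (by rw [finrank_euclideanSpace_fin]; linarith)
      (by rw [finrank_euclideanSpace_fin]; linarith)).lintegral_lt_top
  set C := (J 0).toReal + (J (ε / 2)).toReal + 1
  refine ⟨C, by positivity, fun Λ hΛ p ↦ ?_⟩
  set δ := (if 1 < Λ then ε else 0) / 2
  obtain ⟨hδ₀, hδε, hΛδ, hJC⟩ : 0 ≤ δ ∧ δ < ε ∧ (0 < Λ ∨ δ = 0) ∧ (J δ).toReal ≤ C := by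
    simp only [δ, C]
    split_ifs with hΛ₁
    · exact ⟨by positivity, by linarith, .inl (by linarith),
        by linarith [ENNReal.toReal_nonneg (a := J 0)]⟩
    · refine ⟨by norm_num, by linarith, .inr (by norm_num), ?_⟩
      rw [zero_div]
      linarith [ENNReal.toReal_nonneg (a := J (ε / 2))]
  calc _ ≤ ∫⁻ q : EuclideanSpace ℝ (Fin d), ENNReal.ofReal (Λ ^ (-δ) * ‖p‖ ^ θ) *
          ENNReal.ofReal (‖q‖ ^ (-(2 * α) + δ) * (‖q‖ ^ 2 + 1) ^ (-((1 + θ) / 2))) :=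
        lintegral_mono fun q ↦ by
          rw [← ENNReal.ofReal_mul (by positivity)]
          exact ENNReal.ofReal_le_ofReal (ite_mul_rpow_mul_abs_sqrt_sub_div_le p q μ hΛ hδ₀ hΛδ
            (by linarith) (by linarith))
    _ = ENNReal.ofReal (Λ ^ (-δ) * ‖p‖ ^ θ) * J δ :=
        lintegral_const_mul' _ _ ENNReal.ofReal_ne_top
    _ = ENNReal.ofReal (Λ ^ (-δ) * ‖p‖ ^ θ * (J δ).toReal) := by
        rw [ENNReal.ofReal_mul' ENNReal.toReal_nonneg, ENNReal.ofReal_toReal (hJ δ hδ₀ hδε).ne]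
    _ ≤ ENNReal.ofReal (C * Λ ^ (-δ) * (‖p‖ ^ θ + 1)) := by
        refine ENNReal.ofReal_le_ofReal ?_
        calc Λ ^ (-δ) * ‖p‖ ^ θ * (J δ).toReal ≤ Λ ^ (-δ) * (‖p‖ ^ θ + 1) * C := by
              gcongr
              linarith
          _ = C * Λ ^ (-δ) * (‖p‖ ^ θ + 1) := by ring

theorem stmt_15
    (d : ℕ) (hd : 1 ≤ d) (μ α : ℝ) (hμ : 0 ≤ μ) (hα : 0 ≤ α)
    (h𝒟0 : 0 ≤ (d : ℝ) - 2 * α - 1) (h𝒟1 : (d : ℝ) - 2 * α - 1 < 1) :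
    ∃ ε₀ > (0:ℝ), ∀ ε : ℝ, 0 < ε → ε < ε₀ → ∃ C > (0:ℝ),
      ∀ Λ : ℝ, 0 ≤ Λ → ∀ p : EuclideanSpace ℝ (Fin d),
        (∫⁻ q : EuclideanSpace ℝ (Fin d),
            ENNReal.ofReal ((if Λ < ‖q‖ then (1:ℝ) else 0) * ‖q‖ ^ (-(2 * α)) *
              |Real.sqrt (‖q‖ ^ 2 + μ ^ 2) - Real.sqrt (‖p - q‖ ^ 2 + μ ^ 2)| /
              ((Real.sqrt (‖p - q‖ ^ 2 + μ ^ 2) + Real.sqrt (‖q‖ ^ 2 + 1)) *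
                (Real.sqrt (‖q‖ ^ 2 + μ ^ 2) + Real.sqrt (‖q‖ ^ 2 + 1)))))
          ≤ ENNReal.ofReal (C * Λ ^ (-((if 1 < Λ then ε else 0) / 2)) *
              (‖p‖ ^ (((d : ℝ) - 2 * α - 1) + ε) + 1)) :=
  stmt_15_general d hd μ α h𝒟0 h𝒟1
end
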